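/- arXiv:2106.08099 — 5 statements merged into one kernel-verified Lean document; each statement's English description precedes it below -/
import Mathlib

section
/- Let 𝔥 : ℝ² → ℝ be continuous, positively 1-homogeneous, with 𝔥(ν) > 0 for ν ≠ 0, and strictly convex in the sense that 𝔥(tν + (1−t)μ) < t·𝔥(ν) + (1−t)·𝔥(μ) for every t ∈ (0,1) and all vectors ν, μ which are not positively parallel. Let A, B, C ∈ ℝ² be three points which are not collinear. Then the function L : ℝ² → ℝ defined by L(P) = 𝔥(A−P) + 𝔥(B−P) + 𝔥(C−P) is strictly convex on ℝ². -/
section Aux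

variable {V : Type*} [AddCommGroup V] [Module ℝ V]

/-- If `X - P` and `X - Q` are positively parallel and `P ≠ Q`, then `X` lies on the
line through `P` and `Q`. -/
lemma aux_on_line {X P Q : V} (hne : P ≠ Q)
    (h : (∃ l : ℝ, 0 ≤ l ∧ X - P = l • (X - Q)) ∨ (∃ l : ℝ, 0 ≤ l ∧ X - Q = l • (X - P))) :
    ∃ c : ℝ, X = c • (Q - P) + P := by
  rcases h with ⟨l, _, hc⟩ | ⟨l, _, hc⟩
  · have hl1 : (1 - l) ≠ 0 := by
      intro h0
      have hl : l = 1 := by linarith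
      subst hl
      rw [one_smul] at hc
      exact hne (sub_right_injective hc)
    have h4 : (1 - l) • (X - P) - (-l) • (Q - P) = (X - P) - l • (X - Q) := by module
    have h3 : (1 - l) • (X - P) = (-l) • (Q - P) := by
      have : (1 - l) • (X - P) - (-l) • (Q - P) = 0 := by rw [h4, hc, sub_self]
      exact sub_eq_zero.mp this
    refine ⟨(1 - l)⁻¹ * (-l), ?_⟩
    have : X - P = ((1 - l)⁻¹ * (-l)) • (Q - P) := by
      rw [← smul_smul, ← h3, smul_smul, inv_mul_cancel₀ hl1, one_smul]
    rw [← this]; abel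
  · have hl1 : (1 - l) ≠ 0 := by
      intro h0
      have hl : l = 1 := by linarith
      subst hl
      rw [one_smul] at hc
      exact hne (sub_right_injective hc.symm)
    have h4 : (1 - l) • (X - P) - (Q - P) = (X - Q) - l • (X - P) := by module
    have h3 : (1 - l) • (X - P) = Q - P := by
      have : (1 - l) • (X - P) - (Q - P) = 0 := by rw [h4, hc, sub_self]
      exact sub_eq_zero.mp this
    refine ⟨(1 - l)⁻¹, ?_⟩
    have : X - P = (1 - l)⁻¹ • (Q - P) := by
      rw [← h3, smul_smul, inv_mul_cancel₀ hl1, one_smul]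
    rw [← this]; abel

end Aux

/-- Let `𝔥 : ℝ² → ℝ` be continuous, positively 1-homogeneous, positive
away from `0`, and strictly convex (strict convexity inequality for vectors which are not
positively parallel). If `A, B, C` are three non-collinear points, then the function
`L P = 𝔥 (A - P) + 𝔥 (B - P) + 𝔥 (C - P)` is strictly convex on `ℝ²`. -/
theorem statement_3 (𝔥 : EuclideanSpace ℝ (Fin 2) → ℝ)
    (h_cont : Continuous 𝔥)
    (h_homog : ∀ c : ℝ, 0 ≤ c → ∀ v, 𝔥 (c • v) = c * 𝔥 v)
    (h_pos : ∀ v : EuclideanSpace ℝ (Fin 2), v ≠ 0 → 0 < 𝔥 v)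
    (h_strict : ∀ t ∈ Set.Ioo (0:ℝ) 1, ∀ ν μ : EuclideanSpace ℝ (Fin 2),
      ¬ ((∃ l : ℝ, 0 ≤ l ∧ ν = l • μ) ∨ (∃ l : ℝ, 0 ≤ l ∧ μ = l • ν)) →
      𝔥 (t • ν + (1 - t) • μ) < t * 𝔥 ν + (1 - t) * 𝔥 μ)
    (A B C : EuclideanSpace ℝ (Fin 2))
    (h_noncol : ¬ Collinear ℝ ({A, B, C} : Set (EuclideanSpace ℝ (Fin 2)))) :
    StrictConvexOn ℝ Set.univ
      (fun P : EuclideanSpace ℝ (Fin 2) => 𝔥 (A - P) + 𝔥 (B - P) + 𝔥 (C - P)) := by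
  have key : ∀ t ∈ Set.Ioo (0:ℝ) 1, ∀ ν μ : EuclideanSpace ℝ (Fin 2),
      𝔥 (t • ν + (1 - t) • μ) ≤ t * 𝔥 ν + (1 - t) * 𝔥 μ := by
    intro t ht ν μ
    by_cases hpar : (∃ l : ℝ, 0 ≤ l ∧ ν = l • μ) ∨ (∃ l : ℝ, 0 ≤ l ∧ μ = l • ν)
    · obtain ⟨ht0, ht1⟩ := ht
      rcases hpar with ⟨l, hl, rfl⟩ | ⟨l, hl, rfl⟩
      · have h1 : t • l • μ + (1 - t) • μ = (t * l + (1 - t)) • μ := by module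
        rw [h1, h_homog _ (by nlinarith) μ, h_homog _ hl μ]
        exact le_of_eq (by ring)
      · have h1 : t • ν + (1 - t) • l • ν = (t + (1 - t) * l) • ν := by module
        rw [h1, h_homog _ (by nlinarith) ν, h_homog _ hl ν]
        exact le_of_eq (by ring)
    · exact (h_strict t ht ν μ hpar).le
  refine ⟨convex_univ, fun P _ Q _ hne a b ha hb hab => ?_⟩
  have hb' : b = 1 - a := by linarith
  subst hb'
  have ht : a ∈ Set.Ioo (0:ℝ) 1 := ⟨ha, by linarith⟩
  have hrw : ∀ X : EuclideanSpace ℝ (Fin 2),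
      X - (a • P + (1 - a) • Q) = a • (X - P) + (1 - a) • (X - Q) := by
    intro X; module
  simp only [hrw, smul_eq_mul]
  -- All three pairs being positively parallel would imply collinearity.
  have hnp : ¬ (((∃ l : ℝ, 0 ≤ l ∧ A - P = l • (A - Q)) ∨ (∃ l : ℝ, 0 ≤ l ∧ A - Q = l • (A - P)))
      ∧ ((∃ l : ℝ, 0 ≤ l ∧ B - P = l • (B - Q)) ∨ (∃ l : ℝ, 0 ≤ l ∧ B - Q = l • (B - P)))
      ∧ ((∃ l : ℝ, 0 ≤ l ∧ C - P = l • (C - Q)) ∨ (∃ l : ℝ, 0 ≤ l ∧ C - Q = l • (C - P)))) := by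
    rintro ⟨hA, hB, hC⟩
    apply h_noncol
    rw [collinear_iff_exists_forall_eq_smul_vadd]
    refine ⟨P, Q - P, ?_⟩
    rintro X (rfl | rfl | rfl)
    · obtain ⟨c, hc⟩ := aux_on_line hne hA; exact ⟨c, by rw [hc]; rfl⟩
    · obtain ⟨c, hc⟩ := aux_on_line hne hB; exact ⟨c, by rw [hc]; rfl⟩
    · obtain ⟨c, hc⟩ := aux_on_line hne hC; exact ⟨c, by rw [hc]; rfl⟩
  have kA := key a ht (A - P) (A - Q)
  have kB := key a ht (B - P) (B - Q)
  have kC := key a ht (C - P) (C - Q)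
  rcases not_and_or.mp hnp with h | h
  · have s := h_strict a ht (A - P) (A - Q) h
    linarith
  rcases not_and_or.mp h with h | h
  · have s := h_strict a ht (B - P) (B - Q) h
    linarith
  · have s := h_strict a ht (C - P) (C - Q) h
    linarith
end

section
/- Let 𝔥 : ℝ² → ℝ be continuous, positively 1-homogeneous, with 𝔥(ν) > 0 for ν ≠ 0, continuously differentiable on ℝ² \ {0}, and strictly convex in the sense that 𝔥(tν + (1−t)μ) < t·𝔥(ν) + (1−t)·𝔥(μ) for every t ∈ (0,1) and all vectors ν, μ which are not positively parallel. Let A, B, C, O be four distinct points of ℝ² such that A, B, C are not collinear, and let L : ℝ² → ℝ be defined by L(P) = 𝔥(A−P) + 𝔥(B−P) + 𝔥(C−P). Then O is the unique minimizer of L (that is, L(O) < L(P) for every P ≠ O) if and only if ∇𝔥(A−O) + ∇𝔥(B−O) + ∇𝔥(C−O) = 0. -/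
/-!
Homogeneity makes `𝔥` additive on vectors lying on a common ray, and strict convexity covers all
other pairs, so `𝔥` is convex and `L` is a sum of convex functions: it has a minimum exactly where
its derivative `-(∇𝔥 (A - O) + ∇𝔥 (B - O) + ∇𝔥 (C - O))` vanishes. For uniqueness, given `P ≠ O`,
some vertex `X` lies off the line `OP`, so `X - O` and `X - P` are not positively parallel and the
first-order convexity inequality for the term `𝔥 (X - ·)` is strict.
-/

open Set

section SameRay

variable {E : Type*} [AddCommGroup E] [Module ℝ E]

theorem sameRay_iff_exists_nonneg_smul {ν μ : E} :
    SameRay ℝ ν μ ↔ (∃ l : ℝ, 0 ≤ l ∧ ν = l • μ) ∨ (∃ l : ℝ, 0 ≤ l ∧ μ = l • ν) := by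
  constructor
  · intro h
    rcases eq_or_ne μ 0 with rfl | hμ
    · exact Or.inr ⟨0, le_rfl, (zero_smul ℝ ν).symm⟩
    · exact Or.inl (h.exists_nonneg_right hμ)
  · rintro (⟨l, hl, rfl⟩ | ⟨l, hl, rfl⟩)
    · exact SameRay.sameRay_nonneg_smul_left μ hl
    · exact SameRay.sameRay_nonneg_smul_right ν hl

theorem SameRay.exists_eq_smul_sub {x y : E} (h : SameRay ℝ x y) (hxy : x ≠ y) :
    ∃ r : ℝ, x = r • (x - y) := by
  obtain ⟨u, a, b, -, -, -, rfl, rfl⟩ := h.exists_eq_smul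
  have hab : a - b ≠ 0 := fun hab => hxy (by rw [sub_eq_zero.mp hab])
  exact ⟨a / (a - b), by rw [← sub_smul, smul_smul, div_mul_cancel₀ _ hab]⟩

theorem collinear_of_forall_sameRay_sub {s : Set E} {O P : E} (hOP : O ≠ P)
    (hs : ∀ X ∈ s, SameRay ℝ (X - O) (X - P)) : Collinear ℝ s := by
  rw [collinear_iff_exists_forall_eq_smul_vadd]
  refine ⟨O, P - O, fun X hX => ?_⟩
  obtain ⟨r, hr⟩ := (hs X hX).exists_eq_smul_sub (sub_right_injective.ne hOP)
  rw [sub_sub_sub_cancel_left] at hr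
  exact ⟨r, by rw [vadd_eq_add, ← hr, sub_add_cancel]⟩

theorem map_add_of_sameRay {h : E → ℝ} (h_homog : ∀ c : ℝ, 0 ≤ c → ∀ v, h (c • v) = c * h v)
    {ν μ : E} (hνμ : SameRay ℝ ν μ) : h (ν + μ) = h ν + h μ := by
  obtain ⟨u, a, b, ha, hb, -, rfl, rfl⟩ := hνμ.exists_eq_smul
  rw [← add_smul, h_homog _ (add_nonneg ha hb), h_homog a ha, h_homog b hb, add_mul]

theorem convexOn_univ_of_homogeneous {h : E → ℝ}
    (h_homog : ∀ c : ℝ, 0 ≤ c → ∀ v, h (c • v) = c * h v)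
    (h_strict : ∀ t ∈ Ioo (0 : ℝ) 1, ∀ ν μ : E, ¬ SameRay ℝ ν μ →
      h (t • ν + (1 - t) • μ) < t * h ν + (1 - t) * h μ) :
    ConvexOn ℝ univ h := by
  refine convexOn_iff_forall_pos.mpr ⟨convex_univ, fun ν _ μ _ a b ha hb hab => ?_⟩
  obtain rfl : b = 1 - a := by linarith
  by_cases hνμ : SameRay ℝ ν μ
  · rw [map_add_of_sameRay h_homog ((hνμ.nonneg_smul_left ha.le).nonneg_smul_right hb.le),
      h_homog a ha.le, h_homog _ hb.le]
    rfl
  · exact (h_strict a ⟨ha, by linarith⟩ ν μ hνμ).le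

end SameRay

section FirstOrder

variable {E : Type*} [NormedAddCommGroup E] [NormedSpace ℝ E]

theorem ConvexOn.add_fderiv_sub_le {s : Set E} {f : E → ℝ} {f' : E →L[ℝ] ℝ} {x y : E}
    (hf : ConvexOn ℝ s f) (hx : x ∈ s) (hy : y ∈ s) (hf' : HasFDerivAt f f' x) :
    f x + f' (y - x) ≤ f y := by
  have hline : ConvexOn ℝ (AffineMap.lineMap (k := ℝ) x y ⁻¹' s) (f ∘ AffineMap.lineMap x y) :=
    hf.comp_affineMap _
  have hderiv : HasDerivAt (f ∘ AffineMap.lineMap x y) (f' (y - x)) (0 : ℝ) :=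
    HasFDerivAt.comp_hasDerivAt (0 : ℝ) (by simpa using hf') AffineMap.hasDerivAt_lineMap
  have := hline.le_slope_of_hasDerivAt (by simpa) (by simpa) one_pos hderiv
  simpa [slope_def_field, le_sub_iff_add_le'] using this

theorem HasFDerivAt.add_fderiv_sub_lt_of_not_sameRay {h : E → ℝ}
    (h_homog : ∀ c : ℝ, 0 ≤ c → ∀ v, h (c • v) = c * h v)
    (h_strict : ∀ t ∈ Ioo (0 : ℝ) 1, ∀ ν μ : E, ¬ SameRay ℝ ν μ →
      h (t • ν + (1 - t) • μ) < t * h ν + (1 - t) * h μ)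
    {h' : E →L[ℝ] ℝ} {x y : E} (hh' : HasFDerivAt h h' x) (hxy : ¬ SameRay ℝ x y) :
    h x + h' (y - x) < h y := by
  have hmid := h_strict (1 / 2) (by norm_num) x y hxy
  have hfirst := (convexOn_univ_of_homogeneous h_homog h_strict).add_fderiv_sub_le
    (mem_univ x) (mem_univ ((1 / 2 : ℝ) • x + (1 - 1 / 2 : ℝ) • y)) hh'
  rw [show (1 / 2 : ℝ) • x + (1 - 1 / 2 : ℝ) • y - x = (1 / 2 : ℝ) • (y - x) by module,
    h'.map_smul, smul_eq_mul] at hfirst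
  linarith

end FirstOrder

section FermatPoint

variable {E : Type*} [NormedAddCommGroup E] [NormedSpace ℝ E] {ι : Type*} [Fintype ι]

theorem HasFDerivAt.comp_const_sub {F : Type*} [NormedAddCommGroup F] [NormedSpace ℝ F]
    {f : E → F} {f' : E →L[ℝ] F} {c x : E} (hf : HasFDerivAt f f' (c - x)) :
    HasFDerivAt (fun y => f (c - y)) (-f') x := by
  simpa [Function.comp_def] using hf.comp x ((hasFDerivAt_const c x).sub (hasFDerivAt_id x))

theorem sum_fderiv_eq_zero_of_isMinOn {h : E → ℝ} {p : ι → E} {O : E}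
    (hd : ∀ i, DifferentiableAt ℝ h (p i - O))
    (hmin : IsMinOn (fun P => ∑ i, h (p i - P)) univ O) :
    ∑ i, fderiv ℝ h (p i - O) = 0 := by
  have hL : HasFDerivAt (fun P => ∑ i, h (p i - P)) (∑ i, -fderiv ℝ h (p i - O)) O :=
    HasFDerivAt.fun_sum fun i _ => (hd i).hasFDerivAt.comp_const_sub
  rw [Finset.sum_neg_distrib] at hL
  exact neg_eq_zero.mp ((hmin.isLocalMin Filter.univ_mem).hasFDerivAt_eq_zero hL)

theorem sum_lt_sum_of_sum_fderiv_eq_zero {h : E → ℝ}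
    (h_homog : ∀ c : ℝ, 0 ≤ c → ∀ v, h (c • v) = c * h v)
    (h_strict : ∀ t ∈ Ioo (0 : ℝ) 1, ∀ ν μ : E, ¬ SameRay ℝ ν μ →
      h (t • ν + (1 - t) • μ) < t * h ν + (1 - t) * h μ)
    {p : ι → E} {O : E} (hd : ∀ i, DifferentiableAt ℝ h (p i - O))
    (hp : ¬ Collinear ℝ (range p)) (hcrit : ∑ i, fderiv ℝ h (p i - O) = 0)
    {P : E} (hP : P ≠ O) : ∑ i, h (p i - O) < ∑ i, h (p i - P) := by
  obtain ⟨j, hj⟩ : ∃ j, ¬ SameRay ℝ (p j - O) (p j - P) := by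
    by_contra! hall
    exact hp (collinear_of_forall_sameRay_sub hP.symm (forall_mem_range.mpr hall))
  have hconv := convexOn_univ_of_homogeneous h_homog h_strict
  calc ∑ i, h (p i - O) = ∑ i, (h (p i - O) + fderiv ℝ h (p i - O) (O - P)) := by
        rw [Finset.sum_add_distrib, ← sum_apply, hcrit,
          zero_apply, add_zero]
    _ < ∑ i, h (p i - P) := by
      refine Finset.sum_lt_sum (fun i _ => ?_) ⟨j, Finset.mem_univ j, ?_⟩
      · simpa only [sub_sub_sub_cancel_left] using
          hconv.add_fderiv_sub_le (mem_univ _) (mem_univ (p i - P)) (hd i).hasFDerivAt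
      · simpa only [sub_sub_sub_cancel_left] using
          (hd j).hasFDerivAt.add_fderiv_sub_lt_of_not_sameRay h_homog h_strict hj

theorem forall_sum_lt_iff_sum_gradient_eq_zero {F : Type*} [NormedAddCommGroup F]
    [InnerProductSpace ℝ F] [CompleteSpace F] {h : F → ℝ}
    (h_homog : ∀ c : ℝ, 0 ≤ c → ∀ v, h (c • v) = c * h v)
    (h_strict : ∀ t ∈ Ioo (0 : ℝ) 1, ∀ ν μ : F, ¬ SameRay ℝ ν μ →
      h (t • ν + (1 - t) • μ) < t * h ν + (1 - t) * h μ)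
    {p : ι → F} {O : F} (hd : ∀ i, DifferentiableAt ℝ h (p i - O))
    (hp : ¬ Collinear ℝ (range p)) :
    (∀ P, P ≠ O → ∑ i, h (p i - O) < ∑ i, h (p i - P)) ↔ ∑ i, gradient h (p i - O) = 0 := by
  rw [show ∑ i, gradient h (p i - O) = (InnerProductSpace.toDual ℝ F).symm
      (∑ i, fderiv ℝ h (p i - O)) from (map_sum _ _ _).symm, LinearIsometryEquiv.map_eq_zero_iff]
  refine ⟨fun hmin => sum_fderiv_eq_zero_of_isMinOn hd (isMinOn_iff.mpr fun P _ => ?_),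
    fun hcrit P hP => sum_lt_sum_of_sum_fderiv_eq_zero h_homog h_strict hd hp hcrit hP⟩
  rcases eq_or_ne P O with rfl | hP
  exacts [le_rfl, (hmin P hP).le]

end FermatPoint

theorem statement_4_general (𝔥 : EuclideanSpace ℝ (Fin 2) → ℝ)
    (h_homog : ∀ c : ℝ, 0 ≤ c → ∀ v, 𝔥 (c • v) = c * 𝔥 v)
    (h_C1 : ContDiffOn ℝ 1 𝔥 {(0 : EuclideanSpace ℝ (Fin 2))}ᶜ)
    (h_strict : ∀ t ∈ Set.Ioo (0:ℝ) 1, ∀ ν μ : EuclideanSpace ℝ (Fin 2),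
      ¬ ((∃ l : ℝ, 0 ≤ l ∧ ν = l • μ) ∨ (∃ l : ℝ, 0 ≤ l ∧ μ = l • ν)) →
      𝔥 (t • ν + (1 - t) • μ) < t * 𝔥 ν + (1 - t) * 𝔥 μ)
    (A B C O : EuclideanSpace ℝ (Fin 2))
    (h_dist : A ≠ B ∧ A ≠ C ∧ A ≠ O ∧ B ≠ C ∧ B ≠ O ∧ C ≠ O)
    (h_noncol : ¬ Collinear ℝ ({A, B, C} : Set (EuclideanSpace ℝ (Fin 2)))) :
    (∀ P : EuclideanSpace ℝ (Fin 2), P ≠ O →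
        𝔥 (A - O) + 𝔥 (B - O) + 𝔥 (C - O) < 𝔥 (A - P) + 𝔥 (B - P) + 𝔥 (C - P)) ↔
      gradient 𝔥 (A - O) + gradient 𝔥 (B - O) + gradient 𝔥 (C - O) = 0 := by
  obtain ⟨-, -, hAO, -, hBO, hCO⟩ := h_dist
  have h_strict' : ∀ t ∈ Ioo (0 : ℝ) 1, ∀ ν μ : EuclideanSpace ℝ (Fin 2), ¬ SameRay ℝ ν μ →
      𝔥 (t • ν + (1 - t) • μ) < t * 𝔥 ν + (1 - t) * 𝔥 μ := fun t ht ν μ hνμ =>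
    h_strict t ht ν μ (sameRay_iff_exists_nonneg_smul.not.mp hνμ)
  have hd : ∀ X ≠ O, DifferentiableAt ℝ 𝔥 (X - O) := fun X hX =>
    (h_C1.contDiffAt (isOpen_compl_singleton.mem_nhds (sub_ne_zero.mpr hX))).differentiableAt
      one_ne_zero
  have hd' : ∀ i, DifferentiableAt ℝ 𝔥 (![A, B, C] i - O) := by
    intro i
    fin_cases i
    exacts [hd A hAO, hd B hBO, hd C hCO]
  have hp : ¬ Collinear ℝ (range ![A, B, C]) := by
    rwa [Matrix.range_cons, Matrix.range_cons, Matrix.range_cons_empty]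
  simpa [Fin.sum_univ_three] using forall_sum_lt_iff_sum_gradient_eq_zero h_homog h_strict'
    hd' hp

/-- Let `𝔥 : ℝ² → ℝ` be continuous, positively 1-homogeneous, positive
away from `0`, `C¹` on `ℝ² \ {0}`, and strictly convex. Let `A, B, C, O` be four distinct
points with `A, B, C` not collinear, and `L P = 𝔥 (A - P) + 𝔥 (B - P) + 𝔥 (C - P)`.
Then `O` is the unique minimizer of `L` if and only if
`∇𝔥 (A - O) + ∇𝔥 (B - O) + ∇𝔥 (C - O) = 0`. -/
theorem statement_4 (𝔥 : EuclideanSpace ℝ (Fin 2) → ℝ)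
    (h_cont : Continuous 𝔥)
    (h_homog : ∀ c : ℝ, 0 ≤ c → ∀ v, 𝔥 (c • v) = c * 𝔥 v)
    (h_pos : ∀ v : EuclideanSpace ℝ (Fin 2), v ≠ 0 → 0 < 𝔥 v)
    (h_C1 : ContDiffOn ℝ 1 𝔥 {(0 : EuclideanSpace ℝ (Fin 2))}ᶜ)
    (h_strict : ∀ t ∈ Set.Ioo (0:ℝ) 1, ∀ ν μ : EuclideanSpace ℝ (Fin 2),
      ¬ ((∃ l : ℝ, 0 ≤ l ∧ ν = l • μ) ∨ (∃ l : ℝ, 0 ≤ l ∧ μ = l • ν)) →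
      𝔥 (t • ν + (1 - t) • μ) < t * 𝔥 ν + (1 - t) * 𝔥 μ)
    (A B C O : EuclideanSpace ℝ (Fin 2))
    (h_dist : A ≠ B ∧ A ≠ C ∧ A ≠ O ∧ B ≠ C ∧ B ≠ O ∧ C ≠ O)
    (h_noncol : ¬ Collinear ℝ ({A, B, C} : Set (EuclideanSpace ℝ (Fin 2)))) :
    (∀ P : EuclideanSpace ℝ (Fin 2), P ≠ O →
        𝔥 (A - O) + 𝔥 (B - O) + 𝔥 (C - O) < 𝔥 (A - P) + 𝔥 (B - P) + 𝔥 (C - P)) ↔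
      gradient 𝔥 (A - O) + gradient 𝔥 (B - O) + gradient 𝔥 (C - O) = 0 :=
  statement_4_general 𝔥 h_homog h_C1 h_strict A B C O h_dist h_noncol
end

section
/- Let 𝔥 : ℝ² → ℝ be continuous, positively 1-homogeneous, with 𝔥(ν) > 0 for ν ≠ 0, continuously differentiable on ℝ² \ {0}, and strictly convex in the sense that 𝔥(tν + (1−t)μ) < t·𝔥(ν) + (1−t)·𝔥(μ) for every t ∈ (0,1) and all vectors ν, μ which are not positively parallel. Then there exist three pairwise distinct points A, B, C on the unit sphere ∂C = {v ∈ ℝ² : 𝔥(v) = 1} such that ∇𝔥(A) + ∇𝔥(B) + ∇𝔥(C) = 0. -/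
/-!
The gradient map of `𝔥` sends `{𝔥 = 1}` onto the unit level set of the polar gauge
`g x = sup_{v ≠ 0} ⟪x, v⟫ / 𝔥 v`: if `g x = 1` and the supremum is attained at `v` with `𝔥 v = 1`,
then `w ↦ 𝔥 w - ⟪x, w⟫` is minimal at `v`, so `∇𝔥 v = x`.

So it suffices to find three distinct points with sum `0` on the level set `{g = 1}` of a
continuous, positive, positively homogeneous `g` on the plane. That level set is connected.
Since `g ∘ neg` takes reciprocal values at a point `a` of it and at the normalisation of `-a`,
the intermediate value theorem gives an antipodal pair `a, -a` in it; then `y ↦ g (-a - y)` is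
`0` at `-a` and `2` at `a`, hence `1` at some `y`, and `a, y, -a - y` is the triple.
-/

open Set Metric
open scoped RealInnerProductSpace

def PosHomogeneous {V : Type*} [SMul ℝ V] (g : V → ℝ) : Prop :=
  ∀ c : ℝ, 0 ≤ c → ∀ x, g (c • x) = c * g x

namespace PosHomogeneous

variable {V : Type*} [NormedAddCommGroup V] [NormedSpace ℝ V] {g : V → ℝ}

theorem map_zero (hg : PosHomogeneous g) : g 0 = 0 := by
  simpa using hg 0 le_rfl 0

theorem map_inv_smul_self (hg : PosHomogeneous g) {x : V} (hx : 0 < g x) :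
    g ((g x)⁻¹ • x) = 1 := by
  rw [hg _ (inv_nonneg.mpr hx.le), inv_mul_cancel₀ hx.ne']

theorem isConnected_levelSet_one (hg : PosHomogeneous g) (hV : 1 < Module.rank ℝ V)
    (hcont : Continuous g) (hpos : ∀ x, x ≠ 0 → 0 < g x) : IsConnected {x | g x = 1} := by
  have hnorm : {x | g x = 1} = (fun x => (g x)⁻¹ • x) '' {0}ᶜ := by
    refine Subset.antisymm (fun x (hx : g x = 1) => ⟨x, ?_, by simp [hx]⟩) ?_
    · rintro rfl
      simp [hg.map_zero] at hx
    · rintro _ ⟨x, hx, rfl⟩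
      exact hg.map_inv_smul_self (hpos x hx)
  rw [hnorm]
  refine (isConnected_compl_singleton_of_one_lt_rank hV 0).image _ ?_
  exact (hcont.continuousOn.inv₀ fun x hx => (hpos x hx).ne').smul continuousOn_id

theorem exists_antipodal_levelSet_one (hg : PosHomogeneous g) (hV : 1 < Module.rank ℝ V)
    (hcont : Continuous g) (hpos : ∀ x, x ≠ 0 → 0 < g x) : ∃ a, g a = 1 ∧ g (-a) = 1 := by
  have hS := hg.isConnected_levelSet_one hV hcont hpos
  obtain ⟨a, ha : g a = 1⟩ := hS.nonempty
  have hna : 0 < g (-a) := hpos _ (by rintro h; simp [neg_eq_zero.mp h, hg.map_zero] at ha)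
  set b := (g (-a))⁻¹ • -a
  have hb : g b = 1 := hg.map_inv_smul_self hna
  have hnb : g (-b) = (g (-a))⁻¹ := by
    rw [← smul_neg, neg_neg, hg _ (inv_nonneg.mpr hna.le), ha, mul_one]
  have hneg : ContinuousOn (fun x => g (-x)) {x | g x = 1} :=
    (hcont.comp continuous_neg).continuousOn
  rcases le_total (g (-a)) 1 with h | h
  · exact hS.isPreconnected.intermediate_value₂ ha hb hneg continuousOn_const h
      (hnb ▸ (one_le_inv₀ hna).mpr h)
  · exact hS.isPreconnected.intermediate_value₂ hb ha hneg continuousOn_const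
      (hnb ▸ (inv_le_one₀ hna).mpr h) h

theorem exists_ne_add_add_eq_zero (hg : PosHomogeneous g) (hV : 1 < Module.rank ℝ V)
    (hcont : Continuous g) (hpos : ∀ x, x ≠ 0 → 0 < g x) :
    ∃ x y z, x ≠ y ∧ x ≠ z ∧ y ≠ z ∧ g x = 1 ∧ g y = 1 ∧ g z = 1 ∧ x + y + z = 0 := by
  obtain ⟨a, ha, hna⟩ := hg.exists_antipodal_levelSet_one hV hcont hpos
  have h2a : g (-a - a) = 2 := by
    rw [show -a - a = (2 : ℝ) • -a by module, hg _ zero_le_two, hna, mul_one]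
  obtain ⟨y, hy : g y = 1, hay⟩ : ∃ y ∈ {x | g x = 1}, g (-a - y) = 1 := by
    refine (hg.isConnected_levelSet_one hV hcont hpos).isPreconnected.intermediate_value
      (f := fun x => g (-a - x)) hna ha
      (hcont.comp (continuous_const.sub continuous_id)).continuousOn ?_
    simp only [sub_neg_eq_add, neg_add_cancel, hg.map_zero, h2a]
    norm_num
  refine ⟨a, y, -a - y, ?_, ?_, ?_, ha, hy, hay, by abel⟩
  · rintro rfl
    norm_num [h2a] at hay
  · intro h
    rw [show y = -a - a by linear_combination (norm := module) h, h2a] at hy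
    norm_num at hy
  · intro h
    rw [show y = (1 / 2 : ℝ) • -a by linear_combination (norm := module) (1 / 2 : ℝ) • h,
      hg _ (by norm_num), hna] at hy
    norm_num at hy

end PosHomogeneous

theorem gradient_eq_of_isLocalMin_sub_inner {W : Type*} [NormedAddCommGroup W]
    [InnerProductSpace ℝ W] [CompleteSpace W] {f : W → ℝ} {x v : W}
    (hf : DifferentiableAt ℝ f v) (hmin : IsLocalMin (fun w => f w - ⟪x, w⟫) v) :
    gradient f v = x := by
  have hcrit := hmin.hasFDerivAt_eq_zero (hf.hasFDerivAt.sub (innerSL ℝ x).hasFDerivAt)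
  rw [gradient, sub_eq_zero.mp hcrit]
  exact (InnerProductSpace.toDual ℝ W).symm_apply_eq.mpr (by ext; simp)

section PolarGauge

variable {V : Type*} [NormedAddCommGroup V] [InnerProductSpace ℝ V] {h : V → ℝ}

/-- For positively homogeneous `h` this is `sup_{v ≠ 0} ⟪x, v⟫ / h v`, the gauge of the polar
of `{h ≤ 1}`. -/
noncomputable def polarGauge (h : V → ℝ) (x : V) : ℝ :=
  sSup ((fun v => ⟪x, v⟫ / h v) '' sphere (0 : V) 1)

theorem continuousOn_inner_div (hc : ContinuousOn h (sphere 0 1))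
    (hpos : ∀ v ∈ sphere (0 : V) 1, 0 < h v) (x : V) :
    ContinuousOn (fun v => ⟪x, v⟫ / h v) (sphere 0 1) :=
  (continuous_const.inner continuous_id).continuousOn.div hc fun v hv => (hpos v hv).ne'

theorem le_polarGauge [FiniteDimensional ℝ V] (hc : ContinuousOn h (sphere 0 1))
    (hpos : ∀ v ∈ sphere (0 : V) 1, 0 < h v) (x : V) {v : V} (hv : v ∈ sphere (0 : V) 1) :
    ⟪x, v⟫ / h v ≤ polarGauge h x :=
  le_csSup ((isCompact_sphere 0 1).bddAbove_image (continuousOn_inner_div hc hpos x))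
    (mem_image_of_mem _ hv)

theorem exists_polarGauge_eq [FiniteDimensional ℝ V] [Nontrivial V]
    (hc : ContinuousOn h (sphere 0 1)) (hpos : ∀ v ∈ sphere (0 : V) 1, 0 < h v) (x : V) :
    ∃ v ∈ sphere (0 : V) 1, polarGauge h x = ⟪x, v⟫ / h v :=
  (isCompact_sphere 0 1).exists_sSup_image_eq (NormedSpace.sphere_nonempty.mpr zero_le_one)
    (continuousOn_inner_div hc hpos x)

theorem posHomogeneous_polarGauge (h : V → ℝ) : PosHomogeneous (polarGauge h) := by
  intro c hc x
  simp only [polarGauge]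
  rw [← smul_eq_mul, ← Real.sSup_smul_of_nonneg hc, ← image_smul, image_image]
  simp only [real_inner_smul_left, smul_eq_mul, mul_div_assoc]

theorem polarGauge_pos [FiniteDimensional ℝ V] (hc : ContinuousOn h (sphere 0 1))
    (hpos : ∀ v ∈ sphere (0 : V) 1, 0 < h v) {x : V} (hx : x ≠ 0) : 0 < polarGauge h x := by
  have hu : ‖x‖⁻¹ • x ∈ sphere (0 : V) 1 := by simp [norm_smul, hx]
  refine lt_of_lt_of_le (div_pos ?_ (hpos _ hu)) (le_polarGauge hc hpos x hu)
  rw [real_inner_smul_right]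
  exact mul_pos (by positivity) (real_inner_self_pos.mpr hx)

theorem continuous_polarGauge [FiniteDimensional ℝ V] (hc : ContinuousOn h (sphere 0 1))
    (hpos : ∀ v ∈ sphere (0 : V) 1, 0 < h v) : Continuous (polarGauge h) := by
  have hrange : polarGauge h =
      fun x => sSup ((fun v : sphere (0 : V) 1 => ⟪x, (v : V)⟫ / h v) '' univ) := by
    funext x
    rw [image_univ, range_comp' (fun v => ⟪x, v⟫ / h v) Subtype.val, Subtype.range_coe, polarGauge]
  rw [hrange]
  refine isCompact_univ.continuous_sSup ?_
  exact (continuous_fst.inner (continuous_subtype_val.comp continuous_snd)).div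
    (hc.domRestrict.comp continuous_snd) fun p => (hpos _ p.2.2).ne'

theorem inner_le_of_polarGauge_le_one [FiniteDimensional ℝ V] (hh : PosHomogeneous h)
    (hc : ContinuousOn h (sphere 0 1)) (hpos : ∀ v ∈ sphere (0 : V) 1, 0 < h v) {x : V}
    (hx : polarGauge h x ≤ 1) (w : V) : ⟪x, w⟫ ≤ h w := by
  rcases eq_or_ne w 0 with rfl | hw
  · simp [hh.map_zero]
  have hu : ‖w‖⁻¹ • w ∈ sphere (0 : V) 1 := by simp [norm_smul, hw]
  have hle : ⟪x, ‖w‖⁻¹ • w⟫ ≤ h (‖w‖⁻¹ • w) :=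
    (div_le_one (hpos _ hu)).mp ((le_polarGauge hc hpos x hu).trans hx)
  rwa [real_inner_smul_right, hh _ (by positivity), mul_le_mul_iff_of_pos_left (by positivity)]
    at hle

theorem exists_gradient_eq_of_polarGauge_eq_one [FiniteDimensional ℝ V] (hh : PosHomogeneous h)
    (hpos : ∀ v ∈ sphere (0 : V) 1, 0 < h v) (hdiff : DifferentiableOn ℝ h {0}ᶜ) {x : V}
    (hx : polarGauge h x = 1) : ∃ u, h u = 1 ∧ gradient h u = x := by
  have : Nontrivial V :=
    ⟨x, 0, by rintro rfl; simp [(posHomogeneous_polarGauge h).map_zero] at hx⟩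
  have hc : ContinuousOn h (sphere 0 1) :=
    hdiff.continuousOn.mono fun v hv => ne_zero_of_mem_unit_sphere ⟨v, hv⟩
  obtain ⟨v, hv, hxv⟩ := exists_polarGauge_eq hc hpos x
  set u := (h v)⁻¹ • v
  have hu : h u = 1 := hh.map_inv_smul_self (hpos v hv)
  have hxu : ⟪x, u⟫ = 1 := by rw [real_inner_smul_right, inv_mul_eq_div, ← hxv, hx]
  have hu0 : u ≠ 0 := by rintro h0; simp [h0, hh.map_zero] at hu
  refine ⟨u, hu, gradient_eq_of_isLocalMin_sub_inner
    (hdiff.differentiableAt (isOpen_compl_singleton.mem_nhds hu0)) ?_⟩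
  refine Filter.Eventually.of_forall fun w => ?_
  simpa only [hu, hxu, sub_self, sub_nonneg] using inner_le_of_polarGauge_le_one hh hc hpos hx.le w

end PolarGauge

theorem statement_5_general (𝔥 : EuclideanSpace ℝ (Fin 2) → ℝ)
    (h_homog : ∀ c : ℝ, 0 ≤ c → ∀ v, 𝔥 (c • v) = c * 𝔥 v)
    (h_pos : ∀ v : EuclideanSpace ℝ (Fin 2), v ≠ 0 → 0 < 𝔥 v)
    (h_C1 : ContDiffOn ℝ 1 𝔥 {(0 : EuclideanSpace ℝ (Fin 2))}ᶜ) :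
    ∃ A B C : EuclideanSpace ℝ (Fin 2), A ≠ B ∧ A ≠ C ∧ B ≠ C ∧
      𝔥 A = 1 ∧ 𝔥 B = 1 ∧ 𝔥 C = 1 ∧
      gradient 𝔥 A + gradient 𝔥 B + gradient 𝔥 C = 0 := by
  have hrank : 1 < Module.rank ℝ (EuclideanSpace ℝ (Fin 2)) := by
    rw [← Module.finrank_eq_rank, finrank_euclideanSpace_fin]
    norm_num
  have hdiff : DifferentiableOn ℝ 𝔥 {0}ᶜ := h_C1.differentiableOn one_ne_zero
  have hpos : ∀ v ∈ sphere (0 : EuclideanSpace ℝ (Fin 2)) 1, 0 < 𝔥 v :=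
    fun v hv => h_pos v (ne_zero_of_mem_unit_sphere ⟨v, hv⟩)
  have hc : ContinuousOn 𝔥 (sphere 0 1) :=
    hdiff.continuousOn.mono fun v hv => ne_zero_of_mem_unit_sphere ⟨v, hv⟩
  obtain ⟨x, y, z, hxy, hxz, hyz, hx, hy, hz, hsum⟩ :=
    (posHomogeneous_polarGauge 𝔥).exists_ne_add_add_eq_zero hrank (continuous_polarGauge hc hpos)
      fun x hx => polarGauge_pos hc hpos hx
  obtain ⟨A, hA, rfl⟩ := exists_gradient_eq_of_polarGauge_eq_one h_homog hpos hdiff hx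
  obtain ⟨B, hB, rfl⟩ := exists_gradient_eq_of_polarGauge_eq_one h_homog hpos hdiff hy
  obtain ⟨C, hC, rfl⟩ := exists_gradient_eq_of_polarGauge_eq_one h_homog hpos hdiff hz
  exact ⟨A, B, C, ne_of_apply_ne _ hxy, ne_of_apply_ne _ hxz, ne_of_apply_ne _ hyz,
    hA, hB, hC, hsum⟩

/-- Let `𝔥 : ℝ² → ℝ` be continuous, positively 1-homogeneous, positive
away from `0`, `C¹` on `ℝ² \ {0}`, and strictly convex. Then there exist three pairwise
distinct points `A, B, C` on the unit sphere `{v | 𝔥 v = 1}` such that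
`∇𝔥 A + ∇𝔥 B + ∇𝔥 C = 0` (an admissible triple). -/
theorem statement_5 (𝔥 : EuclideanSpace ℝ (Fin 2) → ℝ)
    (h_cont : Continuous 𝔥)
    (h_homog : ∀ c : ℝ, 0 ≤ c → ∀ v, 𝔥 (c • v) = c * 𝔥 v)
    (h_pos : ∀ v : EuclideanSpace ℝ (Fin 2), v ≠ 0 → 0 < 𝔥 v)
    (h_C1 : ContDiffOn ℝ 1 𝔥 {(0 : EuclideanSpace ℝ (Fin 2))}ᶜ)
    (h_strict : ∀ t ∈ Set.Ioo (0:ℝ) 1, ∀ ν μ : EuclideanSpace ℝ (Fin 2),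
      ¬ ((∃ l : ℝ, 0 ≤ l ∧ ν = l • μ) ∨ (∃ l : ℝ, 0 ≤ l ∧ μ = l • ν)) →
      𝔥 (t • ν + (1 - t) • μ) < t * 𝔥 ν + (1 - t) * 𝔥 μ) :
    ∃ A B C : EuclideanSpace ℝ (Fin 2), A ≠ B ∧ A ≠ C ∧ B ≠ C ∧
      𝔥 A = 1 ∧ 𝔥 B = 1 ∧ 𝔥 C = 1 ∧
      gradient 𝔥 A + gradient 𝔥 B + gradient 𝔥 C = 0 :=
  statement_5_general 𝔥 h_homog h_pos h_C1
end

section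
/- Let F ⊆ ℝᴺ be a Borel set which is porous with constant δ ∈ (0,1): for every x in the topological boundary ∂F there is r₀ > 0 such that for every r ∈ (0, r₀) there exist points y and z with B(y, δr) ⊆ B(x, r) ∩ F and B(z, δr) ⊆ B(x, r) \ F. Then the set F⁽¹⁾ of points of Lebesgue density 1 of F, namely F⁽¹⁾ = {x ∈ ℝᴺ : lim_{r→0⁺} |F ∩ B(x,r)| / |B(x,r)| = 1}, is an open subset of ℝᴺ. -/
open MeasureTheory Metric Filter

/-- Let `F ⊆ ℝᴺ` be a Borel set which is porous with constant
`δ ∈ (0,1)`: for every `x ∈ ∂F` there is `r₀ > 0` such that every ball `B(x,r)` with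
`0 < r < r₀` contains a ball of radius `δ r` inside `B(x,r) ∩ F` and a ball of radius
`δ r` inside `B(x,r) \ F`. Then the set of points of Lebesgue density `1` of `F` is
open. -/
theorem statement_10 (N : ℕ) (F : Set (EuclideanSpace ℝ (Fin N)))
    (hF : MeasurableSet F) (δ : ℝ) (hδ : δ ∈ Set.Ioo (0:ℝ) 1)
    (h_porous : ∀ x ∈ frontier F, ∃ r₀ > 0, ∀ r ∈ Set.Ioo (0:ℝ) r₀,
      ∃ y z : EuclideanSpace ℝ (Fin N),
        Metric.ball y (δ * r) ⊆ Metric.ball x r ∩ F ∧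
        Metric.ball z (δ * r) ⊆ Metric.ball x r \ F) :
    IsOpen {x : EuclideanSpace ℝ (Fin N) |
      Filter.Tendsto
        (fun r : ℝ => volume (F ∩ Metric.ball x r) / volume (Metric.ball x r))
        (nhdsWithin 0 (Set.Ioi 0)) (nhds 1)} := by
  have hV0 : ∀ (x : EuclideanSpace ℝ (Fin N)) (r : ℝ), 0 < r →
      volume (Metric.ball x r) ≠ 0 := fun x r hr =>
    (Metric.measure_ball_pos volume x hr).ne'
  have hVt : ∀ (x : EuclideanSpace ℝ (Fin N)) (r : ℝ),
      volume (Metric.ball x r) ≠ ⊤ := fun x r => measure_ball_lt_top.ne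
  suffices h : {x : EuclideanSpace ℝ (Fin N) |
      Filter.Tendsto
        (fun r : ℝ => volume (F ∩ Metric.ball x r) / volume (Metric.ball x r))
        (nhdsWithin 0 (Set.Ioi 0)) (nhds 1)} = interior F by
    rw [h]; exact isOpen_interior
  ext x
  simp only [Set.mem_setOf_eq]
  constructor
  · intro hx
    by_contra hxi
    by_cases hxc : x ∈ closure F
    · -- frontier case
      have hxf : x ∈ frontier F := ⟨hxc, hxi⟩
      obtain ⟨r₀, hr₀, hp⟩ := h_porous x hxf
      have hδN : (0:ℝ) < δ ^ N := pow_pos hδ.1 N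
      have key : ∀ r ∈ Set.Ioo (0:ℝ) r₀,
          volume (F ∩ Metric.ball x r) / volume (Metric.ball x r)
            ≤ 1 - ENNReal.ofReal (δ ^ N) := by
        intro r hr
        obtain ⟨y, z, hy, hz⟩ := hp r hr
        have hzsub : Metric.ball z (δ * r) ⊆ Metric.ball x r :=
          hz.trans Set.diff_subset
        have hFsub : F ∩ Metric.ball x r ⊆ Metric.ball x r \ Metric.ball z (δ * r) := by
          rintro a ⟨haF, haB⟩
          exact ⟨haB, fun hab => (hz hab).2 haF⟩
        have hdiff : volume (Metric.ball x r \ Metric.ball z (δ * r))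
            = volume (Metric.ball x r) - volume (Metric.ball z (δ * r)) :=
          measure_diff hzsub measurableSet_ball.nullMeasurableSet (hVt z _)
        have hvz : volume (Metric.ball z (δ * r))
            = ENNReal.ofReal (δ ^ N) * volume (Metric.ball x r) := by
          rw [Measure.addHaar_ball_of_pos volume z (mul_pos hδ.1 hr.1),
            Measure.addHaar_ball_of_pos volume x hr.1,
            finrank_euclideanSpace_fin, mul_pow,
            ENNReal.ofReal_mul (by positivity), mul_assoc]
        have h1 : volume (F ∩ Metric.ball x r)
            ≤ (1 - ENNReal.ofReal (δ ^ N)) * volume (Metric.ball x r) := by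
          calc volume (F ∩ Metric.ball x r)
              ≤ volume (Metric.ball x r \ Metric.ball z (δ * r)) :=
                measure_mono hFsub
            _ = volume (Metric.ball x r) - volume (Metric.ball z (δ * r)) := hdiff
            _ = (1 - ENNReal.ofReal (δ ^ N)) * volume (Metric.ball x r) := by
                rw [hvz, ENNReal.sub_mul (fun _ _ => hVt x r), one_mul]
        calc volume (F ∩ Metric.ball x r) / volume (Metric.ball x r)
            ≤ (1 - ENNReal.ofReal (δ ^ N)) * volume (Metric.ball x r)
                / volume (Metric.ball x r) :=
              ENNReal.div_le_div_right h1 _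
          _ = 1 - ENNReal.ofReal (δ ^ N) := by
              rw [mul_div_assoc, ENNReal.div_self (hV0 x r hr.1) (hVt x r), mul_one]
      have hev : ∀ᶠ r in nhdsWithin (0:ℝ) (Set.Ioi 0),
          volume (F ∩ Metric.ball x r) / volume (Metric.ball x r)
            ≤ 1 - ENNReal.ofReal (δ ^ N) := by
        filter_upwards [Ioo_mem_nhdsGT_of_mem (by simp [hr₀] : (0:ℝ) ∈ Set.Ico 0 r₀)]
          with r hr using key r hr
      have hle : (1:ENNReal) ≤ 1 - ENNReal.ofReal (δ ^ N) := le_of_tendsto hx hev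
      have hlt : (1:ENNReal) - ENNReal.ofReal (δ ^ N) < 1 :=
        ENNReal.sub_lt_self ENNReal.one_ne_top one_ne_zero
          (by simpa using hδN)
      exact absurd (hle.trans_lt hlt) (lt_irrefl _)
    · -- exterior case
      have hopen : IsOpen (closure F)ᶜ := isClosed_closure.isOpen_compl
      obtain ⟨ε, hε, hball⟩ := Metric.isOpen_iff.mp hopen x hxc
      have hev : ∀ᶠ r in nhdsWithin (0:ℝ) (Set.Ioi 0),
          volume (F ∩ Metric.ball x r) / volume (Metric.ball x r) = 0 := by
        filter_upwards [Ioo_mem_nhdsGT_of_mem (by simp [hε] : (0:ℝ) ∈ Set.Ico 0 ε)]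
          with r hr
        have : F ∩ Metric.ball x r = ∅ := by
          apply Set.eq_empty_of_forall_notMem
          rintro a ⟨haF, haB⟩
          exact hball (Metric.ball_subset_ball hr.2.le haB) (subset_closure haF)
        simp [this]
      have h0 : Filter.Tendsto
          (fun r : ℝ => volume (F ∩ Metric.ball x r) / volume (Metric.ball x r))
          (nhdsWithin 0 (Set.Ioi 0)) (nhds 0) :=
        Tendsto.congr' (hev.mono fun r h => h.symm) tendsto_const_nhds
      exact one_ne_zero (tendsto_nhds_unique hx h0)
  · intro hx
    obtain ⟨ε, hε, hball⟩ := Metric.isOpen_iff.mp isOpen_interior x hx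
    have hev : ∀ᶠ r in nhdsWithin (0:ℝ) (Set.Ioi 0),
        volume (F ∩ Metric.ball x r) / volume (Metric.ball x r) = 1 := by
      filter_upwards [Ioo_mem_nhdsGT_of_mem (by simp [hε] : (0:ℝ) ∈ Set.Ico 0 ε)]
        with r hr
      have hsub : Metric.ball x r ⊆ F :=
        (Metric.ball_subset_ball hr.2.le).trans (hball.trans interior_subset)
      rw [Set.inter_eq_self_of_subset_right hsub,
        ENNReal.div_self (hV0 x r hr.1) (hVt x r)]
    exact Tendsto.congr' (hev.mono fun r h => h.symm) tendsto_const_nhds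
end

section
/- Let 𝔥 : ℝ² → ℝ be convex and positively 1-homogeneous, and suppose 𝔥 is uniformly round with constant c > 0, meaning that for every unit vector ν ∈ 𝕊¹ and every w ∈ ℝ² with |w| ≤ 1 and w ⊥ ν one has (𝔥(ν + w) + 𝔥(ν − w))/2 ≥ 𝔥(ν) + c·|w|². Let a, b ∈ ℝ² with a ≠ b, let m = (a + b)/2 be the midpoint of the segment ab, and let y ∈ ℝ² be a point such that y − m is orthogonal to b − a and |y − m| ≤ 2·|b − a|. Then 𝔥(y − a) + 𝔥(b − y) ≥ 𝔥(b − a) + c·|y − m|² / (4·|b − a|). -/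
/-!
Rescaling by `‖b - a‖ / 2` turns `y - a` and `b - y` into `ν + w` and `ν - w`, with `ν` the unit
direction of `b - a` and `w = 2 (y - m) / ‖b - a‖ ⊥ ν`, `‖w‖ ≤ 4`. Roundness settles `‖w‖ ≤ 1`.
Beyond that, the excess `s ↦ 𝔥 (ν + s u) + 𝔥 (ν - s u) - 2 𝔥 ν` along the unit vector `u = w / ‖w‖`
is convex and vanishes at `0`, so for `s ≥ 1` it is at least `s` times its value `≥ 2c` at `1`;
a linear lower bound `2cs` still dominates `2cs² / R` while `s ≤ R`.
-/

open RealInnerProductSpace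

def IsUniformlyRound {E : Type*} [NormedAddCommGroup E] [InnerProductSpace ℝ E]
    (f : E → ℝ) (c : ℝ) : Prop :=
  ∀ ν : E, ‖ν‖ = 1 → ∀ w : E, ‖w‖ ≤ 1 → ⟪w, ν⟫ = 0 → f ν + c * ‖w‖ ^ 2 ≤ (f (ν + w) + f (ν - w)) / 2

theorem ConvexOn.mul_sub_le_of_one_le {E : Type*} [AddCommGroup E] [Module ℝ E] {f : E → ℝ}
    (hf : ConvexOn ℝ Set.univ f) (x v : E) {t : ℝ} (ht : 1 ≤ t) :
    t * (f (x + v) - f x) ≤ f (x + t • v) - f x := by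
  have ht0 : 0 < t := one_pos.trans_le ht
  have hcomb : t⁻¹ • (x + t • v) + (1 - t⁻¹) • x = x + v := by
    rw [smul_add, smul_smul, inv_mul_cancel₀ ht0.ne', one_smul]; module
  have hconv := hf.2 (Set.mem_univ (x + t • v)) (Set.mem_univ x) (inv_nonneg.2 ht0.le)
    (sub_nonneg.2 (inv_le_one_of_one_le₀ ht)) (add_sub_cancel _ _)
  rw [hcomb, smul_eq_mul, smul_eq_mul] at hconv
  have := mul_le_mul_of_nonneg_left hconv ht0.le
  field_simp at this ⊢
  linarith

theorem IsUniformlyRound.add_mul_sq_div_le {E : Type*} [NormedAddCommGroup E]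
    [InnerProductSpace ℝ E] {f : E → ℝ} {c R : ℝ} (hround : IsUniformlyRound f c)
    (hf : ConvexOn ℝ Set.univ f) (hc : 0 ≤ c) (hR : 1 ≤ R) {ν w : E} (hν : ‖ν‖ = 1)
    (hwν : ⟪w, ν⟫ = 0) (hwR : ‖w‖ ≤ R) :
    f ν + c * ‖w‖ ^ 2 / R ≤ (f (ν + w) + f (ν - w)) / 2 := by
  rcases le_or_gt ‖w‖ 1 with hw1 | hw1
  · have := hround ν hν w hw1 hwν
    have : c * ‖w‖ ^ 2 / R ≤ c * ‖w‖ ^ 2 := div_le_self (by positivity) hR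
    linarith
  · set t := ‖w‖
    have ht0 : 0 < t := one_pos.trans hw1
    set u := t⁻¹ • w with hu
    have hwu : w = t • u := by rw [hu, smul_smul, mul_inv_cancel₀ ht0.ne', one_smul]
    have hu1 : ‖u‖ = 1 := by
      rw [hu, norm_smul, norm_inv, Real.norm_of_nonneg ht0.le, inv_mul_cancel₀ ht0.ne']
    have huν : ⟪u, ν⟫ = 0 := by rw [hu, real_inner_smul_left, hwν, mul_zero]
    have hround_u := hround ν hν u hu1.le huν
    have hplus := hf.mul_sub_le_of_one_le ν u hw1.le
    have hminus := hf.mul_sub_le_of_one_le ν (-u) hw1.le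
    rw [smul_neg, ← sub_eq_add_neg, ← sub_eq_add_neg, ← hwu] at hminus
    rw [← hwu] at hplus
    rw [hu1, one_pow, mul_one] at hround_u
    have hlin : c * t ^ 2 / R ≤ c * t := by
      rw [div_le_iff₀ (one_pos.trans_le hR)]
      nlinarith [mul_nonneg (mul_nonneg hc ht0.le) (sub_nonneg.2 hwR)]
    have hslope : t * (2 * c) ≤ f (ν + w) + f (ν - w) - 2 * f ν := by
      nlinarith [mul_le_mul_of_nonneg_left hround_u ht0.le]
    linarith

/-- Let `𝔥 : ℝ² → ℝ` be convex, positively 1-homogeneous and uniformly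
round with constant `c > 0`: for every unit vector `ν` and every `w ⊥ ν` with `‖w‖ ≤ 1`,
`(𝔥 (ν + w) + 𝔥 (ν - w)) / 2 ≥ 𝔥 ν + c ‖w‖²`. If `a ≠ b`, `m` is the midpoint of the
segment `ab`, and `y` is such that `y - m ⊥ b - a` and `‖y - m‖ ≤ 2 ‖b - a‖`, then
`𝔥 (y - a) + 𝔥 (b - y) ≥ 𝔥 (b - a) + c ‖y - m‖² / (4 ‖b - a‖)`. -/
theorem statement_13 (𝔥 : EuclideanSpace ℝ (Fin 2) → ℝ)
    (h_convex : ConvexOn ℝ Set.univ 𝔥)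
    (h_homog : ∀ d : ℝ, 0 ≤ d → ∀ v, 𝔥 (d • v) = d * 𝔥 v)
    (c : ℝ) (hc : 0 < c)
    (h_round : ∀ ν : EuclideanSpace ℝ (Fin 2), ‖ν‖ = 1 →
      ∀ w : EuclideanSpace ℝ (Fin 2), ‖w‖ ≤ 1 → ⟪w, ν⟫ = 0 →
      𝔥 ν + c * ‖w‖ ^ 2 ≤ (𝔥 (ν + w) + 𝔥 (ν - w)) / 2)
    (a b m y : EuclideanSpace ℝ (Fin 2)) (hab : a ≠ b)
    (hm : m = (2:ℝ)⁻¹ • (a + b))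
    (h_perp : ⟪y - m, b - a⟫ = 0)
    (h_close : ‖y - m‖ ≤ 2 * ‖b - a‖) :
    𝔥 (b - a) + c * ‖y - m‖ ^ 2 / (4 * ‖b - a‖) ≤ 𝔥 (y - a) + 𝔥 (b - y) := by
  set L := ‖b - a‖
  have hL : 0 < L := norm_pos_iff.2 (sub_ne_zero.2 hab.symm)
  set ν := L⁻¹ • (b - a)
  set w := (2 / L) • (y - m)
  have hν : ‖ν‖ = 1 := by rw [norm_smul, norm_inv, Real.norm_of_nonneg hL.le, inv_mul_cancel₀ hL.ne']
  have hwν : ⟪w, ν⟫ = 0 := by rw [real_inner_smul_left, real_inner_smul_right, h_perp]; ring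
  have hw : ‖w‖ = 2 / L * ‖y - m‖ := by rw [norm_smul, Real.norm_of_nonneg (by positivity)]
  have hw4 : ‖w‖ ≤ 4 := by
    rw [hw, div_mul_eq_mul_div, div_le_iff₀ hL]; linarith
  have key := IsUniformlyRound.add_mul_sq_div_le h_round h_convex hc.le (by norm_num) hν hwν hw4
  have hba : b - a = L • ν := by rw [smul_smul, mul_inv_cancel₀ hL.ne', one_smul]
  have hya : y - a = (L / 2) • (ν + w) := by
    rw [smul_add, smul_smul, smul_smul, hm]; field_simp; module
  have hby : b - y = (L / 2) • (ν - w) := by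
    rw [smul_sub, smul_smul, smul_smul, hm]; field_simp; module
  rw [hw] at key
  have hexcess : c * ‖y - m‖ ^ 2 / (4 * L) ≤ L * (c * (2 / L * ‖y - m‖) ^ 2 / 4) := by
    field_simp; nlinarith [sq_nonneg ‖y - m‖]
  calc 𝔥 (b - a) + c * ‖y - m‖ ^ 2 / (4 * L)
      ≤ L * (𝔥 ν + c * (2 / L * ‖y - m‖) ^ 2 / 4) := by
        rw [hba, h_homog L hL.le]; linarith
    _ ≤ L * ((𝔥 (ν + w) + 𝔥 (ν - w)) / 2) := by gcongr
    _ = 𝔥 (y - a) + 𝔥 (b - y) := by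
        rw [hya, hby, h_homog _ (half_pos hL).le, h_homog _ (half_pos hL).le]; ring
end
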